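/- arXiv:2302.04673 — 2 statements merged into one kernel-verified Lean document; each statement's English description precedes it below -/
import Mathlib

section
/- Schubert varieties are ℚ-algebraic: For every partition λ = (λ_1,…,λ_m) with n ≥ λ_1 ≥ ⋯ ≥ λ_m ≥ 0, the Schubert variety σ_λ ⊆ G_{m,n} (defined by the incidence conditions with respect to the canonical complete flag of ℝ^{m+n}) is a projectively ℚ-closed ℚ-algebraic subset of ℝ^{(m+n)²}; that is, σ_λ is the common zero set of finitely many polynomials with rational coefficients, and in fact the zero set of a single overt polynomial with rational coefficients. -/
open MvPolynomial

noncomputable section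

variable {ι κ : Type*} [Fintype ι] [DecidableEq ι] [Fintype κ]

/-- `V ⊆ ℝ^ι` is a `ℚ`-algebraic set: the common zero set of finitely many
polynomials with rational coefficients. -/
def IsQAlgebraicSet (V : Set (ι → ℝ)) : Prop :=
  ∃ S : Finset (MvPolynomial ι ℚ), V = {x : ι → ℝ | ∀ p ∈ S, aeval x p = 0}

/-- The gradient of a polynomial with rational coefficients at a real point. -/
def polyGradQ (p : MvPolynomial ι ℚ) (a : ι → ℝ) : ι → ℝ :=
  fun i => aeval a (pderiv i p)

/-- `V` is a `d`-dimensional `C^∞` submanifold of `ℝ^ι`: near each of its points it is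
the regular zero set of a `C^∞` submersion with values in `ℝ^(card ι - d)`. -/
def IsSmoothSubmanifold (d : ℕ) (V : Set (ι → ℝ)) : Prop :=
  ∀ a ∈ V, ∃ (U : Set (ι → ℝ)) (f : (ι → ℝ) → (Fin (Fintype.card ι - d) → ℝ)),
    IsOpen U ∧ a ∈ U ∧ ContDiffOn ℝ (⊤ : ℕ∞) f U ∧
    (∀ x ∈ U, Function.Surjective (fderiv ℝ f x)) ∧
    V ∩ U = {x ∈ U | f x = 0}

/-- `V` is a `ℚ`-nonsingular `ℚ`-algebraic set of dimension `d`. -/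
def IsQNonsingular (d : ℕ) (V : Set (ι → ℝ)) : Prop :=
  IsQAlgebraicSet V ∧ IsSmoothSubmanifold d V ∧
    ∀ a ∈ V, ∃ q : Fin (Fintype.card ι - d) → MvPolynomial ι ℚ,
      (∀ j, ∀ x ∈ V, aeval x (q j) = 0) ∧
      LinearIndependent ℝ (fun j => polyGradQ (q j) a) ∧
      ∃ U : Set (ι → ℝ), IsOpen U ∧ a ∈ U ∧
        V ∩ U = {x ∈ U | ∀ j, aeval x (q j) = 0}

/-- A real polynomial is overt if the zero set of its top-degree homogeneous
component is contained in `{0}`. -/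
def IsOvert (p : MvPolynomial ι ℝ) : Prop :=
  ∀ x : ι → ℝ, eval x (homogeneousComponent p.totalDegree p) = 0 → x = 0

/-- `V` is projectively `ℚ`-closed: the zero set of a single overt polynomial with
rational coefficients. -/
def IsProjQClosed (V : Set (ι → ℝ)) : Prop :=
  ∃ p : MvPolynomial ι ℚ, IsOvert (MvPolynomial.map (algebraMap ℚ ℝ) p) ∧
    V = {x : ι → ℝ | aeval x p = 0}

/-- `V ⊆ ℝ^ι` is a real algebraic set. -/
def IsRAlgebraicSet (V : Set (ι → ℝ)) : Prop :=
  ∃ S : Finset (MvPolynomial ι ℝ), V = {x : ι → ℝ | ∀ p ∈ S, eval x p = 0}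

/-- The gradient of a real polynomial at a point. -/
def polyGradR (p : MvPolynomial ι ℝ) (a : ι → ℝ) : ι → ℝ :=
  fun i => eval a (pderiv i p)

/-- `V` is a nonsingular real algebraic set of dimension `d`. -/
def IsNonsingularRAlgebraic (d : ℕ) (V : Set (ι → ℝ)) : Prop :=
  IsRAlgebraicSet V ∧ IsSmoothSubmanifold d V ∧
    ∀ a ∈ V, ∃ q : Fin (Fintype.card ι - d) → MvPolynomial ι ℝ,
      (∀ j, ∀ x ∈ V, eval x (q j) = 0) ∧
      LinearIndependent ℝ (fun j => polyGradR (q j) a) ∧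
      ∃ U : Set (ι → ℝ), IsOpen U ∧ a ∈ U ∧
        V ∩ U = {x ∈ U | ∀ j, eval x (q j) = 0}

/-- The tangent space of `M` at `a`, realized as the span of the tangent cone. -/
def tangentSpan (M : Set (ι → ℝ)) (a : ι → ℝ) : Submodule ℝ (ι → ℝ) :=
  Submodule.span ℝ (tangentConeAt ℝ M a)

/-- The submanifolds `Ms i` of `M`, of codimensions `c i`, are in general position. -/
def InGeneralPosition {ℓ : ℕ} (M : Set (ι → ℝ)) (Ms : Fin ℓ → Set (ι → ℝ))
    (c : Fin ℓ → ℕ) : Prop :=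
  ∀ α : Finset (Fin ℓ), α.Nonempty → ∀ a : ι → ℝ, (∀ i ∈ α, a ∈ Ms i) →
    Module.finrank ℝ ↥(⨅ i ∈ α, tangentSpan (Ms i) a) + ∑ i ∈ α, c i
      = Module.finrank ℝ ↥(tangentSpan M a)

/-- A `ℚ`-regular map on `S`: each component is a quotient of polynomials with
rational coefficients whose denominator does not vanish on `S`. -/
def IsQRegularMap (S : Set (ι → ℝ)) (g : (ι → ℝ) → κ → ℝ) : Prop :=
  ∀ j : κ, ∃ p q : MvPolynomial ι ℚ, (∀ x ∈ S, aeval x q ≠ 0) ∧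
    ∀ x ∈ S, g x j = aeval x p / aeval x q

/-- A map whose components are restrictions of polynomials with rational coefficients. -/
def IsQPolynomialMap {κ' : Type*} (S : Set (ι → ℝ)) (g : (ι → ℝ) → κ' → ℝ) : Prop :=
  ∀ j : κ', ∃ p : MvPolynomial ι ℚ, ∀ x ∈ S, g x j = aeval x p

/-- `f` restricts to a `C^∞` diffeomorphism from `A` onto `B`. -/
def IsSmoothDiffeoOn (f : (ι → ℝ) → κ → ℝ) (A : Set (ι → ℝ)) (B : Set (κ → ℝ)) : Prop :=
  Set.BijOn f A B ∧ ContDiffOn ℝ (⊤ : ℕ∞) f A ∧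
    ∃ g : (κ → ℝ) → ι → ℝ, ContDiffOn ℝ (⊤ : ℕ∞) g B ∧ Set.InvOn g f A B

/-- `L` is a `ℚ`-nice `ℚ`-algebraic set. -/
def IsQNice (L : Set (ι → ℝ)) : Prop :=
  ∀ a ∈ L, ∃ U : Set (ι → ℝ), IsOpen U ∧ a ∈ U ∧
    ∀ f : (ι → ℝ) → ℝ, ContDiff ℝ (⊤ : ℕ∞) f → (∀ x ∈ L, f x = 0) →
      ∃ (s : ℕ) (pp : Fin s → MvPolynomial ι ℚ) (u : Fin s → (ι → ℝ) → ℝ),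
        (∀ i, ∀ x ∈ L, aeval x (pp i) = 0) ∧
        (∀ i, ContDiffOn ℝ (⊤ : ℕ∞) (u i) U) ∧
        ∀ x ∈ U, f x = ∑ i, u i x * aeval x (pp i)

/-- Inclusion `ℝ^a ⊆ ℝ^b` via the first `a` coordinates. -/
def inclZero {a b : ℕ} (_ : a ≤ b) (x : Fin a → ℝ) : Fin b → ℝ :=
  fun j => if hj : (j : ℕ) < a then x ⟨j, hj⟩ else 0

/-- Reading a point of `ℝ^(k×k)` as a `k × k` matrix. -/
def matOf {k : ℕ} (x : Fin k × Fin k → ℝ) : Matrix (Fin k) (Fin k) ℝ :=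
  Matrix.of fun i j => x (i, j)

/-- The symmetric idempotent matrices of size `k` and trace `r`. -/
def GrassMatrix (k r : ℕ) : Set (Matrix (Fin k) (Fin k) ℝ) :=
  {X | X.transpose = X ∧ X * X = X ∧ X.trace = (r : ℝ)}

/-- The Grassmannian `G_{m,n}` embedded in `ℝ^{(m+n)²}`. -/
def Grass (m n : ℕ) : Set (Fin (m + n) × Fin (m + n) → ℝ) :=
  {x | matOf x ∈ GrassMatrix (m + n) m}

/-- The diagonal matrix `D_ℓ` with `1` in the first `ℓ` diagonal entries and `0` elsewhere. -/
def stdProj (k ℓ : ℕ) : Matrix (Fin k) (Fin k) ℝ :=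
  Matrix.diagonal fun i => if (i : ℕ) < ℓ then 1 else 0

/-- The coordinate subspace `ℝ^ℓ ⊆ ℝ^k` (first `ℓ` coordinates). -/
def coordSubspace (k ℓ : ℕ) : Submodule ℝ (Fin k → ℝ) :=
  ⨅ i ∈ {i : Fin k | ℓ ≤ (i : ℕ)},
    LinearMap.ker (LinearMap.proj (R := ℝ) (φ := fun _ : Fin k => ℝ) i)

/-- The column space of a square matrix. -/
def colSpace {k : ℕ} (X : Matrix (Fin k) (Fin k) ℝ) : Submodule ℝ (Fin k → ℝ) :=
  LinearMap.range X.mulVecLin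

/-- `lam` is a partition inside the `m × n` rectangle. -/
def IsPartitionIn (n : ℕ) {m : ℕ} (lam : Fin m → ℕ) : Prop :=
  (∀ k, lam k ≤ n) ∧ Antitone lam

/-- The Schubert variety `σ_λ ⊆ G_{m,n}` with respect to the canonical complete flag. -/
def SchubertVariety (m n : ℕ) (lam : Fin m → ℕ) :
    Set (Fin (m + n) × Fin (m + n) → ℝ) :=
  {x | x ∈ Grass m n ∧ ∀ k : Fin m,
    ((matOf x - 1) * stdProj (m + n) (n + ((k : ℕ) + 1) - lam k)).rank ≤ n - lam k}

/-- `λ_{k+1}`, with the convention `λ_{m+1} = 0`. -/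
def lamNext {m : ℕ} (lam : Fin m → ℕ) (k : Fin m) : ℕ :=
  if h : (k : ℕ) + 1 < m then lam ⟨(k : ℕ) + 1, h⟩ else 0

/-- The open Schubert cell `Ω_λ ⊆ G_{m,n}` with respect to the canonical complete flag. -/
def SchubertCell (m n : ℕ) (lam : Fin m → ℕ) :
    Set (Fin (m + n) × Fin (m + n) → ℝ) :=
  {x | x ∈ Grass m n ∧ ∀ k : Fin m, ∀ ℓ : ℕ,
    n + ((k : ℕ) + 1) - lam k ≤ ℓ → ℓ ≤ n + ((k : ℕ) + 1) - lamNext lam k →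
    Module.finrank ℝ ↥(colSpace (matOf x) ⊓ coordSubspace (m + n) ℓ) = (k : ℕ) + 1}

/-- `f 0 + ⋯ + f (t-1)` for `f : Fin c → ℕ`. -/
def partialSum {c : ℕ} (f : Fin c → ℕ) (t : ℕ) : ℕ :=
  ∑ i ∈ Finset.univ.filter (fun i : Fin c => (i : ℕ) < t), f i

/-- The `j`-th matrix slot of a point of `(ℝ^{k×k})^c`. -/
def matSlot {c k : ℕ} (z : Fin c × (Fin k × Fin k) → ℝ) (j : Fin c) :
    Matrix (Fin k) (Fin k) ℝ :=
  Matrix.of fun p q => z (j, (p, q))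

/-- The embedded Bott–Samelson set `Z_λ`, with slot `0` carrying `X` and slot `k`
(`1 ≤ k ≤ c-1`) carrying `Y_k`. -/
def BottSamelson (m n c : ℕ) (hc : 0 < c) (a b : Fin c → ℕ) :
    Set (Fin c × (Fin (m + n) × Fin (m + n)) → ℝ) :=
  {z | matSlot z ⟨0, hc⟩ ∈ GrassMatrix (m + n) m ∧
    (∀ j : Fin c, 0 < (j : ℕ) →
      matSlot z j ∈ GrassMatrix (m + n) (partialSum a (j : ℕ)) ∧
      matSlot z j * stdProj (m + n) (partialSum a (j : ℕ) + partialSum b (j : ℕ))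
        = matSlot z j) ∧
    (∀ (j : Fin c), 0 < (j : ℕ) → ∀ (h2 : (j : ℕ) + 1 < c),
      matSlot z ⟨(j : ℕ) + 1, h2⟩ * matSlot z j = matSlot z j) ∧
    (∀ j : Fin c, 0 < (j : ℕ) → (j : ℕ) = c - 1 →
      matSlot z ⟨0, hc⟩ * matSlot z j = matSlot z j)}

end

/-!
`G_{m,n}` is cut out by the rational matrix equations `Xᵀ = X`, `X² = X`, `tr X = m`. A rank
condition `rank A ≤ r` on a square matrix of size `k` is polynomial too: `AᵀA` is symmetric with the
rank of `A`, so its characteristic polynomial has `0` as a root of multiplicity `k - rank A`, and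
`rank A ≤ r` says exactly that its coefficients of degree `< k - r` vanish. These coefficients are
rational polynomials in the entries of `X` when `A = (X - 1) D_ℓ`.

For projective closedness, every `X ∈ G_{m,n}` satisfies `‖X‖² = tr (XᵀX) = tr X = m`. If the
polynomials `p ∈ S` cut out a set on this sphere, so does `∑ p² + (‖x‖² - m)^e` for even `e`, and
for `2e > deg ∑ p²` its top homogeneous component is `‖x‖^(2e)`, which vanishes only at `0`.
-/

namespace Matrix

lemma IsHermitian.rootMultiplicity_zero_charpoly {𝕜 κ : Type*} [RCLike 𝕜] [Fintype κ]
    [DecidableEq κ] {B : Matrix κ κ 𝕜} (hB : B.IsHermitian) :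
    B.charpoly.rootMultiplicity 0 = Fintype.card {i // hB.eigenvalues i = 0} := by
  classical
  rw [← Polynomial.count_roots, hB.roots_charpoly_eq_eigenvalues, Multiset.count_map,
    Fintype.card_subtype]
  simp only [eq_comm (a := (0 : 𝕜)), Function.comp_apply, RCLike.ofReal_eq_zero]
  rfl

lemma IsHermitian.rank_le_iff_coeff_charpoly_eq_zero {𝕜 κ : Type*} [RCLike 𝕜]
    [Fintype κ] [DecidableEq κ] {B : Matrix κ κ 𝕜} (hB : B.IsHermitian) (r : ℕ) :
    B.rank ≤ r ↔ ∀ j < Fintype.card κ - r, B.charpoly.coeff j = 0 := by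
  rw [← Polynomial.X_pow_dvd_iff, ← sub_zero Polynomial.X, ← Polynomial.C_0,
    ← Polynomial.le_rootMultiplicity_iff B.charpoly_monic.ne_zero,
    hB.rootMultiplicity_zero_charpoly, hB.rank_eq_card_non_zero_eigs]
  have := Fintype.card_subtype_le (fun i => hB.eigenvalues i = 0)
  simp only [Fintype.card_subtype_compl] at *
  omega

lemma rank_le_iff_coeff_charpoly_transpose_mul_self_eq_zero {κ κ' : Type*} [Fintype κ]
    [Fintype κ'] [DecidableEq κ] (A : Matrix κ' κ ℝ) (r : ℕ) :
    A.rank ≤ r ↔ ∀ j < Fintype.card κ - r, (Aᵀ * A).charpoly.coeff j = 0 := by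
  have hA : (Aᵀ * A).IsHermitian := by simpa using isHermitian_conjTranspose_mul_self A
  rw [← rank_transpose_mul_self]
  exact hA.rank_le_iff_coeff_charpoly_eq_zero r

end Matrix

section QAlgebraic
open Matrix
variable {ι : Type*}

lemma isQAlgebraicSet_setOf_forall_aeval_eq_zero {α : Type*} [Finite α]
    (p : α → MvPolynomial ι ℚ) : IsQAlgebraicSet {x : ι → ℝ | ∀ a, aeval x (p a) = 0} := by
  classical
  have := Fintype.ofFinite α
  exact ⟨Finset.univ.image p, by ext x; simp⟩

lemma IsQAlgebraicSet.inter {V W : Set (ι → ℝ)} (hV : IsQAlgebraicSet V)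
    (hW : IsQAlgebraicSet W) : IsQAlgebraicSet (V ∩ W) := by
  classical
  obtain ⟨S, rfl⟩ := hV
  obtain ⟨T, rfl⟩ := hW
  exact ⟨S ∪ T, by ext x; simp [or_imp, forall_and]⟩

lemma isQAlgebraicSet_iInter {α : Type*} [Finite α] {V : α → Set (ι → ℝ)}
    (hV : ∀ a, IsQAlgebraicSet (V a)) : IsQAlgebraicSet (⋂ a, V a) := by
  classical
  have := Fintype.ofFinite α
  choose S hS using hV
  exact ⟨Finset.univ.biUnion S, by ext x; simp [hS]; exact forall_comm⟩

lemma isQAlgebraicSet_setOf_map_aeval_eq_zero {κ κ' : Type*} [Finite κ] [Finite κ']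
    (A : Matrix κ κ' (MvPolynomial ι ℚ)) :
    IsQAlgebraicSet {x : ι → ℝ | A.map (aeval x) = 0} := by
  convert isQAlgebraicSet_setOf_forall_aeval_eq_zero (fun p : κ × κ' => A p.1 p.2) using 3
  simp [← Matrix.ext_iff, Prod.forall]

lemma isQAlgebraicSet_setOf_rank_le {κ κ' : Type*} [Fintype κ] [Fintype κ'] [DecidableEq κ]
    (A : Matrix κ' κ (MvPolynomial ι ℚ)) (r : ℕ) :
    IsQAlgebraicSet {x : ι → ℝ | (A.map (aeval x)).rank ≤ r} := by
  convert isQAlgebraicSet_setOf_forall_aeval_eq_zero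
    (fun j : Fin (Fintype.card κ - r) => (Aᵀ * A).charpoly.coeff j) using 3 with x
  rw [rank_le_iff_coeff_charpoly_transpose_mul_self_eq_zero, Fin.forall_iff]
  have hmap : (A.map (aeval x))ᵀ * A.map (aeval x) = (Aᵀ * A).map (aeval x).toRingHom := by
    simp [transpose_map]
  simp only [hmap, charpoly_map, Polynomial.coeff_map]
  rfl

end QAlgebraic

lemma MvPolynomial.totalDegree_sub_C_pow_sub_pow_le {σ R : Type*} [CommRing R]
    (a : MvPolynomial σ R) (c : R) (e : ℕ) :
    ((a - C c) ^ e - a ^ e).totalDegree ≤ (e - 1) * a.totalDegree := by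
  have hac : (a - C c).totalDegree ≤ a.totalDegree := by
    simpa using totalDegree_sub a (C c)
  rw [← (Commute.all _ _).geom_sum₂_mul, sub_sub_cancel_left]
  refine (totalDegree_mul _ _).trans ?_
  rw [totalDegree_neg, totalDegree_C, add_zero]
  refine (totalDegree_finsetSum _ _).trans (Finset.sup_le fun i hi => ?_)
  have hi : i < e := Finset.mem_range.mp hi
  calc ((a - C c) ^ i * a ^ (e - 1 - i)).totalDegree
      ≤ i * (a - C c).totalDegree + (e - 1 - i) * a.totalDegree :=
        (totalDegree_mul _ _).trans (add_le_add (totalDegree_pow _ _) (totalDegree_pow _ _))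
    _ ≤ i * a.totalDegree + (e - 1 - i) * a.totalDegree := by gcongr
    _ = (e - 1) * a.totalDegree := by rw [← add_mul]; congr 1; omega

lemma isOvert_add_of_isHomogeneous {ι : Type*} {T E : MvPolynomial ι ℝ} {D : ℕ}
    (hT : T.IsHomogeneous D) (hT0 : ∀ x, eval x T = 0 → x = 0) (hE : E.totalDegree < D) :
    IsOvert (T + E) := by
  intro x hx
  rcases isEmpty_or_nonempty ι with hι | hι
  · exact Subsingleton.elim _ _
  have hTne : T ≠ 0 := by
    rintro rfl
    exact one_ne_zero (congrFun (hT0 1 (map_zero _)) (Classical.arbitrary ι))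
  rw [totalDegree_add_eq_left_of_totalDegree_lt (hT.totalDegree hTne ▸ hE), hT.totalDegree hTne,
    map_add, homogeneousComponent_of_mem hT, if_pos rfl, homogeneousComponent_eq_zero _ _ hE,
    add_zero] at hx
  exact hT0 x hx

section Overt
variable {ι : Type*} [Fintype ι]

lemma eval_sum_X_sq_eq_zero_iff (x : ι → ℝ) : eval x (∑ i, X i ^ 2) = 0 ↔ x = 0 := by
  simp [Finset.sum_eq_zero_iff_of_nonneg fun i _ => sq_nonneg (x i), _root_.funext_iff]

lemma IsQAlgebraicSet.isProjQClosed_of_sum_sq_eq {V : Set (ι → ℝ)} (hV : IsQAlgebraicSet V)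
    (c : ℚ) (hc : ∀ x ∈ V, ∑ i, x i ^ 2 = (c : ℝ)) : IsProjQClosed V := by
  obtain ⟨S, rfl⟩ := hV
  set q : MvPolynomial ι ℚ := ∑ p ∈ S, p ^ 2
  set e := 2 * (q.totalDegree + 1)
  set s : MvPolynomial ι ℚ := ∑ i, X i ^ 2
  have he : Even e := even_two_mul _
  refine ⟨q + (s - C c) ^ e, ?_, ?_⟩
  · set sR : MvPolynomial ι ℝ := ∑ i, X i ^ 2
    have hsR : sR.IsHomogeneous 2 := IsHomogeneous.sum _ _ _ fun i _ => isHomogeneous_X_pow i 2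
    have hmap : MvPolynomial.map (algebraMap ℚ ℝ) (q + (s - C c) ^ e)
        = sR ^ e + (MvPolynomial.map (algebraMap ℚ ℝ) q + ((sR - C (c : ℝ)) ^ e - sR ^ e)) := by
      simp only [s, sR, map_add, map_pow, map_sub, map_sum, map_X, map_C, eq_ratCast]
      ring
    rw [hmap]
    refine isOvert_add_of_isHomogeneous (hsR.pow e) (fun x hx => ?_) ?_
    · rw [map_pow, pow_eq_zero_iff (by omega)] at hx
      exact (eval_sum_X_sq_eq_zero_iff x).mp hx
    · have hq : (MvPolynomial.map (algebraMap ℚ ℝ) q).totalDegree ≤ q.totalDegree :=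
        Finset.sup_mono (support_map_subset _ _)
      have hrest := (totalDegree_sub_C_pow_sub_pow_le sR (c : ℝ) e).trans
        (Nat.mul_le_mul_left (e - 1) hsR.totalDegree_le)
      refine (totalDegree_add _ _).trans_lt (max_lt ?_ ?_) <;> omega
  · ext x
    have hsq : ∀ p ∈ S, 0 ≤ aeval x p ^ 2 := fun p _ => sq_nonneg _
    simp only [Set.mem_ofPred_eq, q, s, map_add, map_sum, map_pow, map_sub, aeval_X, aeval_C,
      add_eq_zero_iff_of_nonneg (Finset.sum_nonneg hsq) (he.pow_nonneg _),
      Finset.sum_eq_zero_iff_of_nonneg hsq, pow_eq_zero_iff two_ne_zero, eq_ratCast,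
      pow_eq_zero_iff (by omega : e ≠ 0), sub_eq_zero]
    exact ⟨fun hx => ⟨hx, hc x hx⟩, And.left⟩

end Overt

section Grassmannian
open Matrix

lemma map_aeval_mvPolynomialX {k : ℕ} (x : Fin k × Fin k → ℝ) :
    (mvPolynomialX (Fin k) (Fin k) ℚ).map (aeval x) = matOf x := by
  ext i j
  simp [matOf]

lemma isQAlgebraicSet_grass (m n : ℕ) : IsQAlgebraicSet (Grass m n) := by
  set G := mvPolynomialX (Fin (m + n)) (Fin (m + n)) ℚ
  have hG : Grass m n = {x | (Gᵀ - G).map (aeval x) = 0} ∩ {x | (G * G - G).map (aeval x) = 0}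
      ∩ {x | ∀ _ : Unit, aeval x (G.trace - (m : MvPolynomial _ ℚ)) = 0} := by
    ext x
    simp [Grass, GrassMatrix, Matrix.map_sub, sub_eq_zero, transpose_map, AddMonoidHom.map_trace,
      map_aeval_mvPolynomialX, G, and_assoc]
  rw [hG]
  exact ((isQAlgebraicSet_setOf_map_aeval_eq_zero _).inter
    (isQAlgebraicSet_setOf_map_aeval_eq_zero _)).inter
    (isQAlgebraicSet_setOf_forall_aeval_eq_zero _)

lemma sum_sq_eq_of_mem_grassMatrix {k r : ℕ} {x : Fin k × Fin k → ℝ}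
    (hx : matOf x ∈ GrassMatrix k r) : ∑ p, x p ^ 2 = r := by
  obtain ⟨hsymm, hidem, htr⟩ := hx
  calc ∑ p, x p ^ 2 = ((matOf x)ᵀ * matOf x).trace := by
        simp [trace, mul_apply, matOf, Fintype.sum_prod_type_right, sq]
    _ = r := by rw [hsymm, hidem, htr]

lemma isQAlgebraicSet_schubertVariety (m n : ℕ) (lam : Fin m → ℕ) :
    IsQAlgebraicSet (SchubertVariety m n lam) := by
  set G := mvPolynomialX (Fin (m + n)) (Fin (m + n)) ℚ
  set D : ℕ → Matrix (Fin (m + n)) (Fin (m + n)) (MvPolynomial (Fin (m + n) × Fin (m + n)) ℚ) :=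
    fun ℓ => diagonal fun i => if (i : ℕ) < ℓ then 1 else 0
  have hσ : SchubertVariety m n lam = Grass m n ∩
      ⋂ k : Fin m, {x | (((G - 1) * D (n + (k + 1) - lam k)).map (aeval x)).rank ≤ n - lam k} := by
    ext x
    simp [SchubertVariety, stdProj, Matrix.map_sub, map_aeval_mvPolynomialX, G, D]
  rw [hσ]
  exact (isQAlgebraicSet_grass m n).inter
    (isQAlgebraicSet_iInter fun k => isQAlgebraicSet_setOf_rank_le _ _)

end Grassmannian

theorem schubertVariety_isQAlgebraic_isProjQClosed_general
    (m n : ℕ) (lam : Fin m → ℕ) :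
    IsQAlgebraicSet (SchubertVariety m n lam) ∧
    IsProjQClosed (SchubertVariety m n lam) := by
  have hσ := isQAlgebraicSet_schubertVariety m n lam
  refine ⟨hσ, hσ.isProjQClosed_of_sum_sq_eq m fun x hx => ?_⟩
  rw [sum_sq_eq_of_mem_grassMatrix hx.1, Rat.cast_natCast]

/-- **Schubert varieties are projectively `ℚ`-closed `ℚ`-algebraic sets.** -/
theorem schubertVariety_isQAlgebraic_isProjQClosed
    (m n : ℕ) (lam : Fin m → ℕ) (hpart : IsPartitionIn n lam) :
    IsQAlgebraicSet (SchubertVariety m n lam) ∧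
    IsProjQClosed (SchubertVariety m n lam) :=
  schubertVariety_isQAlgebraic_isProjQClosed_general m n lam
end

section
/- Overt polynomials are proper: Let p ∈ ℝ[x_1,…,x_N] be a non-constant overt polynomial. Then the polynomial function p : ℝ^N → ℝ is proper, i.e. the preimage of every compact subset of ℝ is compact. Consequently, every projectively ℚ-closed ℚ-algebraic subset of ℝ^N is compact. -/
open MvPolynomial

/-!
Write `p = p_e + r` with `p_e` the top homogeneous component and `deg r < e`. By homogeneity,
`|p_e x| = ‖x‖ ^ e * |p_e u|` for a unit vector `u`; overtness and compactness of the unit sphere give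
`|p_e x| ≥ m ‖x‖ ^ e` with `m > 0`, while each component of `r` is `O(‖x‖ ^ i)` with `i < e`.
Hence `|p x| ≥ (m / 2) ‖x‖ ^ e → ∞`, so `p` is proper and its zero set is compact; an overt constant
has no zeros unless there are no variables at all.
-/

open Filter Asymptotics Metric

lemma exists_mem_sphere_eq_norm_smul {E : Type*} [NormedAddCommGroup E] [NormedSpace ℝ E]
    [Nontrivial E] (x : E) : ∃ u ∈ sphere (0 : E) 1, x = ‖x‖ • u := by
  rcases eq_or_ne x 0 with rfl | hx
  · obtain ⟨u, hu⟩ := exists_norm_eq E zero_le_one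
    exact ⟨u, by simpa using hu, by simp⟩
  · refine ⟨‖x‖⁻¹ • x, by simp [norm_smul, hx], ?_⟩
    rw [smul_inv_smul₀ (norm_ne_zero_iff.mpr hx)]

namespace MvPolynomial

variable {σ : Type*} [Fintype σ]

theorem IsHomogeneous.eval_smul {R : Type*} [CommSemiring R]
    {φ : MvPolynomial σ R} {n : ℕ} (hφ : φ.IsHomogeneous n) (c : R) (x : σ → R) :
    eval (c • x) φ = c ^ n * eval x φ := by
  rw [eval_eq', eval_eq', Finset.mul_sum]
  refine Finset.sum_congr rfl fun d hd => ?_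
  have hdeg : ∑ i, d i = n := by
    rw [← Finsupp.degree_eq_sum, Finsupp.degree_eq_weight_one]
    exact hφ (mem_support_iff.mp hd)
  simp only [Pi.smul_apply, smul_eq_mul, mul_pow, Finset.prod_mul_distrib,
    Finset.prod_pow_eq_pow_sum, hdeg]
  ring

variable {φ : MvPolynomial σ ℝ} {n : ℕ}

theorem IsHomogeneous.exists_mem_sphere_abs_eval_eq [Nonempty σ] (hφ : φ.IsHomogeneous n)
    (x : σ → ℝ) : ∃ u ∈ sphere (0 : σ → ℝ) 1, |eval x φ| = ‖x‖ ^ n * |eval u φ| := by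
  obtain ⟨u, hu, hx⟩ := exists_mem_sphere_eq_norm_smul x
  refine ⟨u, hu, ?_⟩
  rw [hx, hφ.eval_smul, abs_mul, abs_pow, abs_norm, ← hx]

theorem IsHomogeneous.isBigO_eval [Nonempty σ] (hφ : φ.IsHomogeneous n) :
    (fun x => eval x φ) =O[⊤] fun x => ‖x‖ ^ n := by
  obtain ⟨C, hC⟩ :=
    (isCompact_sphere (0 : σ → ℝ) 1).exists_bound_of_continuousOn (continuous_eval φ).continuousOn
  refine IsBigO.of_bound C (Eventually.of_forall fun x => ?_)
  obtain ⟨u, hu, h⟩ := hφ.exists_mem_sphere_abs_eval_eq x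
  rw [Real.norm_eq_abs, h, norm_pow, norm_norm, mul_comm]
  exact mul_le_mul_of_nonneg_right (hC u hu) (by positivity)

theorem IsHomogeneous.exists_pos_mul_norm_pow_le [Nonempty σ] (hφ : φ.IsHomogeneous n)
    (h : ∀ x, eval x φ = 0 → x = 0) : ∃ m > 0, ∀ x, m * ‖x‖ ^ n ≤ |eval x φ| := by
  obtain ⟨u₀, hu₀, hmin⟩ := (isCompact_sphere (0 : σ → ℝ) 1).exists_isMinOn
    (NormedSpace.sphere_nonempty.mpr zero_le_one) (continuous_eval φ).abs.continuousOn
  refine ⟨|eval u₀ φ|, abs_pos.mpr fun h0 => ?_, fun x => ?_⟩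
  · simp [h u₀ h0] at hu₀
  · obtain ⟨u, hu, hx⟩ := hφ.exists_mem_sphere_abs_eval_eq x
    rw [hx, mul_comm]
    exact mul_le_mul_of_nonneg_left (hmin hu) (by positivity)

theorem isLittleO_eval_sum_homogeneousComponent [Nonempty σ] (p : MvPolynomial σ ℝ) (k : ℕ) :
    (fun x => eval x (∑ i ∈ Finset.range k, homogeneousComponent i p))
      =o[Bornology.cobounded (σ → ℝ)] fun x => ‖x‖ ^ k := by
  simp_rw [map_sum]
  refine IsLittleO.fun_sum fun i hi => ?_
  exact ((homogeneousComponent_isHomogeneous i p).isBigO_eval.mono le_top).trans_isLittleO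
    ((isLittleO_pow_pow_atTop_of_lt (𝕜 := ℝ) (Finset.mem_range.mp hi)).comp_tendsto
      tendsto_norm_cobounded_atTop)

end MvPolynomial

open MvPolynomial

namespace IsOvert

variable {σ : Type*} [Fintype σ] {p : MvPolynomial σ ℝ}

theorem tendsto_norm_eval_cobounded (hp : IsOvert p) (hd : p.totalDegree ≠ 0) :
    Tendsto (fun x => ‖eval x p‖) (Bornology.cobounded (σ → ℝ)) atTop := by
  rcases isEmpty_or_nonempty σ with hσ | hσ
  · simp
  set e := p.totalDegree
  set r := ∑ i ∈ Finset.range e, homogeneousComponent i p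
  obtain ⟨m, hm, htop⟩ := (homogeneousComponent_isHomogeneous e p).exists_pos_mul_norm_pow_le hp
  have hsplit : p = homogeneousComponent e p + r := by
    conv_lhs => rw [← sum_homogeneousComponent p, Finset.sum_range_succ, add_comm]
  have hlow := (isLittleO_eval_sum_homogeneousComponent p e).def (half_pos hm)
  have hgrow : Tendsto (fun x : σ → ℝ => m / 2 * ‖x‖ ^ e) (Bornology.cobounded _) atTop :=
    ((tendsto_pow_atTop hd).comp tendsto_norm_cobounded_atTop).const_mul_atTop (half_pos hm)
  refine tendsto_atTop_mono' _ (hlow.mono fun x hx => ?_) hgrow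
  rw [norm_pow, norm_norm] at hx
  have htri := norm_sub_le (eval x p) (eval x r)
  rw [← map_sub, hsplit, add_sub_cancel_right, ← hsplit, Real.norm_eq_abs] at htri
  linarith [htop x]

theorem isProperMap_eval (hp : IsOvert p) (hd : p.totalDegree ≠ 0) :
    IsProperMap fun x : σ → ℝ => eval x p :=
  isProperMap_iff_tendsto_cocompact.mpr ⟨continuous_eval p, by
    rw [← cobounded_eq_cocompact, ← cobounded_eq_cocompact, ← tendsto_norm_atTop_iff_cobounded]
    exact hp.tendsto_norm_eval_cobounded hd⟩

theorem isCompact_setOf_eval_eq_zero (hp : IsOvert p) : IsCompact {x : σ → ℝ | eval x p = 0} := by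
  by_cases hd : p.totalDegree = 0
  · rcases isEmpty_or_nonempty σ with hσ | hσ
    · exact Set.toFinite _ |>.isCompact
    obtain ⟨c, rfl⟩ : ∃ c, p = C c := ⟨_, totalDegree_eq_zero_iff_eq_C.mp hd⟩
    have hc : c ≠ 0 := fun hc => one_ne_zero (hp 1 (by simp [hc]))
    simp [hc]
  · exact (hp.isProperMap_eval hd).isCompact_preimage isCompact_singleton

end IsOvert

/-- **Overt polynomials are proper; projectively `ℚ`-closed sets are compact.** -/
theorem overt_proper_and_projQClosed_compact {N : ℕ} :
    (∀ p : MvPolynomial (Fin N) ℝ, IsOvert p → p.totalDegree ≠ 0 →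
      ∀ K : Set ℝ, IsCompact K → IsCompact ((fun x : Fin N → ℝ => eval x p) ⁻¹' K)) ∧
    (∀ V : Set (Fin N → ℝ), IsProjQClosed V → IsCompact V) := by
  refine ⟨fun p hp hd K hK => (hp.isProperMap_eval hd).isCompact_preimage hK, ?_⟩
  rintro V ⟨p, hp, rfl⟩
  simpa [eval_map, aeval_def] using hp.isCompact_setOf_eval_eq_zero
end
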